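/- Let A=(I,O,S,E) be an isADMG and M=(I,V,E') an iMAG that represents A. Let a∈I∪V and b∈V be such that a→b is in M. If a→b is visible in M, then there exists no S-inducing walk from a to b in A whose edge at a has an arrowhead at a (i.e., no S-inducing walk into a); in particular, the bidirected edge a↔b is not in A. -/

import Mathlib

noncomputable section
open Classical

/-- Edge-endpoint marks: tail `−`, arrowhead `>`, or circle `∘`. -/
inductive Mark : Type
  | tail
  | arrow
  | circle
  deriving DecidableEq

/-- A mixed graph with input nodes over a node type `N`, as raw data.
`mark a b` is the mark at `a` on the (unique) edge between `a` and `b`,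
or `none` if there is no edge between `a` and `b`. -/
structure MixedGraph (N : Type) where
  inputs : Set N
  outputs : Set N
  mark : N → N → Option Mark

namespace MixedGraph

variable {N N' : Type}

/-- All nodes of the graph. -/
def nodes (G : MixedGraph N) : Set N := G.inputs ∪ G.outputs

/-- `a` and `b` are adjacent (joined by an edge). -/
def adj (G : MixedGraph N) (a b : N) : Prop := (G.mark a b).isSome

/-- Directed edge `a → b`: tail at `a`, arrowhead at `b`. -/
def dir (G : MixedGraph N) (a b : N) : Prop :=
  G.mark a b = some Mark.tail ∧ G.mark b a = some Mark.arrow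

/-- Bidirected edge `a ↔ b`. -/
def bidir (G : MixedGraph N) (a b : N) : Prop :=
  G.mark a b = some Mark.arrow ∧ G.mark b a = some Mark.arrow

/-- Undirected edge `a − b`. -/
def undir (G : MixedGraph N) (a b : N) : Prop :=
  G.mark a b = some Mark.tail ∧ G.mark b a = some Mark.tail

/-- Edge `a ∘→ b`: circle at `a`, arrowhead at `b`. -/
def circArrow (G : MixedGraph N) (a b : N) : Prop :=
  G.mark a b = some Mark.circle ∧ G.mark b a = some Mark.arrow

/-- Edge `a ∘−∘ b`: circles at both ends. -/
def circCirc (G : MixedGraph N) (a b : N) : Prop :=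
  G.mark a b = some Mark.circle ∧ G.mark b a = some Mark.circle

/-- Edge `a ∘− b`: circle at `a`, tail at `b`. -/
def circTail (G : MixedGraph N) (a b : N) : Prop :=
  G.mark a b = some Mark.circle ∧ G.mark b a = some Mark.tail

/-- Edge `a −∘ b`: tail at `a`, circle at `b`. -/
def tailCirc (G : MixedGraph N) (a b : N) : Prop :=
  G.mark a b = some Mark.tail ∧ G.mark b a = some Mark.circle

/-- Some edge of `G` carries an arrowhead at `a`. -/
def arrowAt (G : MixedGraph N) (a : N) : Prop :=
  ∃ b, G.mark a b = some Mark.arrow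

/-- `a` is an ancestor of `b`: `a = b` or a directed path `a → ⋯ → b` exists. -/
def anc (G : MixedGraph N) : N → N → Prop := Relation.ReflTransGen G.dir

/-- The ancestors of a set `S` of nodes. -/
def ancSet (G : MixedGraph N) (S : Set N) : Set N := {a | ∃ s ∈ S, G.anc a s}

/-- Potentially directed edge from `a` towards `b`: an edge with no arrowhead at its
earlier endpoint `a` and no tail at its later endpoint `b`. -/
def potDir (G : MixedGraph N) (a b : N) : Prop :=
  G.adj a b ∧ G.mark a b ≠ some Mark.arrow ∧ G.mark b a ≠ some Mark.tail

/-- `a` is a possible ancestor of `b`: `a = b` or a potentially directed path runs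
from `a` to `b`. -/
def poAn (G : MixedGraph N) : N → N → Prop := Relation.ReflTransGen G.potDir

/-- The possible ancestors of a set `S` of nodes. -/
def poAnSet (G : MixedGraph N) (S : Set N) : Set N := {a | ∃ s ∈ S, G.poAn a s}

/-- Well-formedness of a mixed graph with input nodes: inputs and outputs are disjoint
finite sets, edges are symmetric and irreflexive and join nodes of the graph. -/
def WF (G : MixedGraph N) : Prop :=
  Disjoint G.inputs G.outputs ∧ G.inputs.Finite ∧ G.outputs.Finite ∧
  (∀ a b, (G.mark a b).isSome → (G.mark b a).isSome) ∧
  (∀ a, G.mark a a = none) ∧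
  (∀ a b, (G.mark a b).isSome → a ∈ G.nodes ∧ b ∈ G.nodes)

/-- The induced subgraph of `G` over the node set `A`. -/
def induce (G : MixedGraph N) (A : Set N) : MixedGraph N where
  inputs := G.inputs ∩ A
  outputs := G.outputs ∩ A
  mark := fun a b => if a ∈ A ∧ b ∈ A then G.mark a b else none

/-- Transport a mixed graph over `N` to one over `N ⊕ N'` along `Sum.inl`. -/
def sumInl (G : MixedGraph N) : MixedGraph (N ⊕ N') where
  inputs := Sum.inl '' G.inputs
  outputs := Sum.inl '' G.outputs
  mark := fun x y =>
    match x, y with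
    | Sum.inl a, Sum.inl b => G.mark a b
    | _, _ => none

/-- `G` is a subgraph of `H`: its nodes and marked edges are among those of `H`. -/
def Subgraph (G H : MixedGraph N) : Prop :=
  G.inputs ⊆ H.inputs ∧ G.outputs ⊆ H.outputs ∧
  ∀ a b m, G.mark a b = some m → H.mark a b = some m

end MixedGraph

/-- A walk in `G` with `len` edges, visiting the nodes `f 0, …, f len`
(consecutive nodes are adjacent). -/
structure GWalk {N : Type} (G : MixedGraph N) where
  len : ℕ
  f : ℕ → N
  hadj : ∀ i < len, G.adj (f i) (f (i + 1))

namespace GWalk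

variable {N : Type} {G : MixedGraph N}

/-- The first node of the walk. -/
def first (w : GWalk G) : N := w.f 0

/-- The last node of the walk. -/
def last (w : GWalk G) : N := w.f w.len

/-- The walk is a path: no repeated nodes. -/
def IsPath (w : GWalk G) : Prop :=
  ∀ i ≤ w.len, ∀ j ≤ w.len, w.f i = w.f j → i = j

/-- The (interior) node at position `i` is a collider on the walk: both incident
edges carry arrowheads at it. -/
def ColliderAt (w : GWalk G) (i : ℕ) : Prop :=
  G.mark (w.f i) (w.f (i - 1)) = some Mark.arrow ∧
  G.mark (w.f i) (w.f (i + 1)) = some Mark.arrow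

end GWalk

namespace MixedGraph

variable {N : Type}

/-- `w` is an `(L,S)`-inducing walk: every non-endnode is in `L` or a collider, and
every collider lies in `Anc({first, last} ∪ S)`. -/
def InducingWalk (G : MixedGraph N) (L S : Set N) (w : GWalk G) : Prop :=
  (∀ i, 0 < i → i < w.len → w.f i ∈ L ∨ w.ColliderAt i) ∧
  (∀ i, 0 < i → i < w.len → w.ColliderAt i →
    w.f i ∈ G.ancSet ({w.first, w.last} ∪ S))

/-- There is an `(L,S)`-inducing walk from `a` to `b` in `G`. -/
def InducingWalkBtw (G : MixedGraph N) (L S : Set N) (a b : N) : Prop :=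
  ∃ w : GWalk G, w.first = a ∧ w.last = b ∧ G.InducingWalk L S w

/-- There is an `(L,S)`-inducing path from `a` to `b` in `G`. -/
def InducingPathBtw (G : MixedGraph N) (L S : Set N) (a b : N) : Prop :=
  ∃ w : GWalk G, w.IsPath ∧ w.first = a ∧ w.last = b ∧ G.InducingWalk L S w

/-- `G` is an iADMG: all edges directed or bidirected, no directed cycles, no
arrowheads at input nodes, and no edges between two input nodes. -/
def IsIADMG (G : MixedGraph N) : Prop :=
  G.WF ∧
  (∀ a b, G.adj a b → G.dir a b ∨ G.dir b a ∨ G.bidir a b) ∧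
  (∀ a b, G.dir a b → ¬ G.anc b a) ∧
  (∀ a ∈ G.inputs, ∀ b, G.mark a b ≠ some Mark.arrow) ∧
  (∀ a ∈ G.inputs, ∀ b ∈ G.inputs, ¬ G.adj a b)

/-- `G` is an iPAG. -/
def IsIPAG (G : MixedGraph N) : Prop :=
  G.WF ∧
  (∀ a ∈ G.inputs, ∀ b, G.mark a b ≠ some Mark.arrow) ∧
  (∀ a ∈ G.inputs, ∀ b ∈ G.inputs, ¬ G.adj a b) ∧
  (∀ a b, G.dir a b → ¬ G.anc b a) ∧
  (∀ a b, G.anc a b → ¬ G.bidir b a) ∧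
  (∀ a b c, G.mark b a = some Mark.arrow → ¬ G.undir b c) ∧
  (∀ a b, a ≠ b → a ∈ G.nodes → b ∈ G.nodes → ¬ G.adj a b →
    ¬ G.InducingPathBtw ∅ ∅ a b)

/-- `G` is an iMAG: an iPAG with no circle marks. -/
def IsIMAG (G : MixedGraph N) : Prop :=
  G.IsIPAG ∧ ∀ a b, G.mark a b ≠ some Mark.circle

/-- The visibility condition for a directed edge `a → b` of `G`: either `a` is an
input node, or some node `c` not adjacent to `b` satisfies `c *→ a`, or there is a
path `c *→ v₁ ↔ ⋯ ↔ v_{n−1} ↔ a` (`n ≥ 2`) with every `vᵢ` a parent of `b`. -/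
def VisibleCond (G : MixedGraph N) (a b : N) : Prop :=
  a ∈ G.inputs ∨
  ∃ c, c ≠ b ∧ ¬ G.adj c b ∧
    (G.mark a c = some Mark.arrow ∨
      ∃ w : GWalk G, w.IsPath ∧ 2 ≤ w.len ∧ w.first = c ∧ w.last = a ∧
        G.mark (w.f 1) (w.f 0) = some Mark.arrow ∧
        (∀ i, 1 ≤ i → i < w.len → G.bidir (w.f i) (w.f (i + 1))) ∧
        (∀ i, 1 ≤ i → i < w.len → G.dir (w.f i) b))

/-- `a → b` is a visible directed edge of `G`. -/
def VisibleDir (G : MixedGraph N) (a b : N) : Prop :=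
  G.dir a b ∧ G.VisibleCond a b

/-- `a` and `b` are in the same bucket of `G`: some path between them carries no
arrowhead mark on any of its edges. -/
def SameBucket (G : MixedGraph N) (a b : N) : Prop :=
  ∃ w : GWalk G, w.IsPath ∧ w.first = a ∧ w.last = b ∧
    ∀ i < w.len, G.mark (w.f i) (w.f (i + 1)) ≠ some Mark.arrow ∧
      G.mark (w.f (i + 1)) (w.f i) ≠ some Mark.arrow

end MixedGraph

/-- An isADMG: an iADMG together with its set `sel` of latent selection nodes.
The observed output nodes are `graph.outputs \ sel`. -/
structure SADMG (N : Type) where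
  graph : MixedGraph N
  sel : Set N

namespace SADMG

/-- Well-formedness of an isADMG. -/
def WF {N : Type} (A : SADMG N) : Prop :=
  A.graph.IsIADMG ∧ A.sel ⊆ A.graph.outputs

/-- The observed output nodes `O`. -/
def obs {N : Type} (A : SADMG N) : Set N := A.graph.outputs \ A.sel

end SADMG

/-- An ilsADMG: an iADMG together with its sets of latent output nodes and of
latent selection nodes.  The observed output nodes are the remaining outputs. -/
structure LSADMG (N : Type) where
  graph : MixedGraph N
  latent : Set N
  sel : Set N

namespace LSADMG

/-- Well-formedness of an ilsADMG. -/
def WF {N : Type} (A : LSADMG N) : Prop :=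
  A.graph.IsIADMG ∧ A.latent ⊆ A.graph.outputs ∧ A.sel ⊆ A.graph.outputs ∧
  Disjoint A.latent A.sel

/-- The observed output nodes `O`. -/
def obs {N : Type} (A : LSADMG N) : Set N := A.graph.outputs \ (A.latent ∪ A.sel)

end LSADMG

/-- An iPAG/iMAG `P` represents the isADMG `A`: nodes match; adjacency in `P`
corresponds exactly to `S`-inducing paths in `A` (with no edges inside the inputs);
arrowheads at `a` imply `a ∉ Anc_A({b} ∪ S)`; tails at `a` imply `a ∈ Anc_A({b} ∪ S)`. -/
def RepresentsS {N : Type} (P : MixedGraph N) (A : SADMG N) : Prop :=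
  P.inputs = A.graph.inputs ∧
  P.outputs = A.obs ∧
  (∀ a b, a ≠ b → a ∈ P.nodes → b ∈ P.nodes →
    (P.adj a b ↔
      (¬(a ∈ P.inputs ∧ b ∈ P.inputs) ∧ A.graph.InducingPathBtw ∅ A.sel a b))) ∧
  (∀ a b, P.mark a b = some Mark.arrow → a ∉ A.graph.ancSet ({b} ∪ A.sel)) ∧
  (∀ a b, P.mark a b = some Mark.tail → a ∈ A.graph.ancSet ({b} ∪ A.sel))

/-- An iPAG/iMAG `P` `(L,S)`-represents the ilsADMG `A`. -/
def RepresentsLS {N : Type} (P : MixedGraph N) (A : LSADMG N) : Prop :=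
  P.inputs = A.graph.inputs ∧
  P.outputs = A.obs ∧
  (∀ a b, a ≠ b → a ∈ P.nodes → b ∈ P.nodes →
    (P.adj a b ↔
      (¬(a ∈ P.inputs ∧ b ∈ P.inputs) ∧ A.graph.InducingPathBtw A.latent A.sel a b))) ∧
  (∀ a b, P.mark a b = some Mark.arrow → a ∉ A.graph.ancSet ({b} ∪ A.sel)) ∧
  (∀ a b, P.mark a b = some Mark.tail → a ∈ A.graph.ancSet ({b} ∪ A.sel))

/-- The explicit candidate for `MAG(A)` of an ilsADMG `A`: input nodes `I`, output
nodes `O`; distinct `a,b ∈ I ∪ O` adjacent iff `{a,b} ⊄ I` and there is an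
`(L,S)`-inducing path between them in `A`; the mark at `a` on each edge is a tail
if `a ∈ Anc_A({b} ∪ S)` and an arrowhead otherwise. -/
def magOfLS {N : Type} (A : LSADMG N) : MixedGraph N where
  inputs := A.graph.inputs
  outputs := A.obs
  mark := fun a b =>
    if a ≠ b ∧ a ∈ A.graph.inputs ∪ A.obs ∧ b ∈ A.graph.inputs ∪ A.obs ∧
        ¬(a ∈ A.graph.inputs ∧ b ∈ A.graph.inputs) ∧
        A.graph.InducingPathBtw A.latent A.sel a b then
      (if a ∈ A.graph.ancSet ({b} ∪ A.sel) then some Mark.tail else some Mark.arrow)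
    else none

/-- A walk is `C`-open (in a graph without circle marks): its endnodes are not in
`C`, no non-collider on it is in `C`, and every collider on it is in `Anc(C)`. -/
def COpen {N : Type} (H : MixedGraph N) (C : Set N) (w : GWalk H) : Prop :=
  w.first ∉ C ∧ w.last ∉ C ∧
  ∀ i, 0 < i → i < w.len →
    (¬ w.ColliderAt i → w.f i ∉ C) ∧ (w.ColliderAt i → w.f i ∈ H.ancSet C)

/-- `A` is id-separated from `B` given `C` in `H` (graphs without circle marks):
every path/walk from a node of `A` to a node of `B ∪ inputs` is not `C`-open. -/
def IdSepSimple {N : Type} (H : MixedGraph N) (A B C : Set N) : Prop :=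
  ∀ w : GWalk H, w.first ∈ A → w.last ∈ B ∪ H.inputs → ¬ COpen H C w

/-- A walk in a manipulated graph `H` (with set `DI` of regime input nodes) is
`C`-id-open. -/
def IdOpen {N : Type} (H : MixedGraph N) (DI C : Set N) (w : GWalk H) : Prop :=
  w.first ∉ C ∧ w.last ∉ C ∧
  ∀ i, 0 < i → i < w.len →
    (w.f i ∉ C ∧ (H.mark (w.f i) (w.f (i - 1)) = some Mark.tail ∨
        H.mark (w.f i) (w.f (i + 1)) = some Mark.tail)) ∨
    (w.f i ∉ C ∧ H.mark (w.f i) (w.f (i - 1)) = some Mark.circle ∧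
        H.mark (w.f i) (w.f (i + 1)) = some Mark.circle ∧
        ¬ H.adj (w.f (i - 1)) (w.f (i + 1))) ∨
    (w.ColliderAt i ∧ w.f (i - 1) ∉ DI ∧ w.f i ∉ DI ∧ w.f (i + 1) ∉ DI ∧
        w.f i ∈ H.ancSet C) ∨
    (w.ColliderAt i ∧ ¬(w.f (i - 1) ∉ DI ∧ w.f i ∉ DI ∧ w.f (i + 1) ∉ DI) ∧
        w.f i ∈ H.poAnSet (C ∩ H.outputs)) ∨
    (w.f (i - 1) ∈ DI ∧ H.mark (w.f i) (w.f (i - 1)) = some Mark.circle ∧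
        H.mark (w.f i) (w.f (i + 1)) = some Mark.arrow ∧
        w.f i ∈ H.poAnSet (C ∩ H.outputs)) ∨
    (w.f (i + 1) ∈ DI ∧ H.mark (w.f i) (w.f (i - 1)) = some Mark.arrow ∧
        H.mark (w.f i) (w.f (i + 1)) = some Mark.circle ∧
        w.f i ∈ H.poAnSet (C ∩ H.outputs))

/-- `A` is id-separated from `B` given `C` in the manipulated graph `H`, whose set
of regime input nodes is `DI`: every path/walk from a node of `A` to a node of
`B ∪ inputs` is not `C`-id-open. -/
def IdSep {N : Type} (H : MixedGraph N) (DI A B C : Set N) : Prop :=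
  ∀ w : GWalk H, w.first ∈ A → w.last ∈ B ∪ H.inputs → ¬ IdOpen H DI C w

/-- Hard manipulation `do(T)` of an isADMG-type graph: reclassify the nodes of `T`
as input nodes and delete every edge with an arrowhead at a node of `T`. -/
def admgHardManip {N : Type} (G : MixedGraph N) (T : Set N) : MixedGraph N where
  inputs := G.inputs ∪ (T ∩ G.outputs)
  outputs := G.outputs \ T
  mark := fun x y =>
    if (x ∈ T ∧ G.mark x y = some Mark.arrow) ∨
        (y ∈ T ∧ G.mark y x = some Mark.arrow) then none
    else G.mark x y

/-- Soft manipulation `do(I_D)` of an isADMG-type graph: add a fresh input node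
`I_d = Sum.inr d` and the directed edge `I_d → d` for each `d ∈ D`. -/
def admgSoftManip {N : Type} (G : MixedGraph N) (D : Set N) : MixedGraph (N ⊕ N) where
  inputs := Sum.inl '' G.inputs ∪ Sum.inr '' D
  outputs := Sum.inl '' G.outputs
  mark := fun x y =>
    match x, y with
    | Sum.inl a, Sum.inl b => G.mark a b
    | Sum.inr d, Sum.inl a => if d ∈ D ∧ a = d then some Mark.tail else none
    | Sum.inl a, Sum.inr d => if d ∈ D ∧ a = d then some Mark.arrow else none
    | Sum.inr _, Sum.inr _ => none

/-- Soft manipulation of an isADMG. -/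
def SADMG.softManip {N : Type} (A : SADMG N) (D : Set N) : SADMG (N ⊕ N) where
  graph := admgSoftManip A.graph D
  sel := Sum.inl '' A.sel

/-- Hard manipulation `do(T)` of an iMAG-type graph: input nodes `I ∪ (T ∩ V)`,
output nodes `V \ T`; delete all edges with an arrowhead at a node of `T \ I` and
all edges between two nodes of `T ∪ I`. -/
def magHardManip {N : Type} (G : MixedGraph N) (T : Set N) : MixedGraph N where
  inputs := G.inputs ∪ (T ∩ G.outputs)
  outputs := G.outputs \ T
  mark := fun x y =>
    if (x ∈ T ∧ x ∉ G.inputs ∧ G.mark x y = some Mark.arrow) ∨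
        (y ∈ T ∧ y ∉ G.inputs ∧ G.mark y x = some Mark.arrow) ∨
        ((x ∈ T ∨ x ∈ G.inputs) ∧ (y ∈ T ∨ y ∈ G.inputs)) then none
    else G.mark x y

/-- The mark at node `y` on the new edge between the regime node `I_a = Sum.inr a`
and `y` in the soft manipulation of an iMAG-type graph `G` over `N ⊕ N`
(`none` if there is no such edge): `I_a → a` if some edge of `G` has an arrowhead
at `a`; `I_a − a` if some undirected edge is at `a`; `I_a −∘ a` otherwise;
`I_a → b` for every output `b` with `a → b` invisible; `I_a − b` for every output
`b` with `a − b` in `G`. -/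
def magSoftTarget {N : Type} (G : MixedGraph (N ⊕ N)) (a : N) (y : N ⊕ N) : Option Mark :=
  if y = Sum.inl a then
    (if G.arrowAt (Sum.inl a) then some Mark.arrow
     else if ∃ c, G.undir (Sum.inl a) c then some Mark.tail
     else some Mark.circle)
  else if y ∈ G.outputs ∧ G.dir (Sum.inl a) y ∧ ¬ G.VisibleCond (Sum.inl a) y then
    some Mark.arrow
  else if y ∈ G.outputs ∧ G.undir (Sum.inl a) y then some Mark.tail
  else none

/-- The mark at node `y` on the new edge between the regime node `I_a = Sum.inr a`
and `y` in the soft manipulation of an iPAG-type graph `G` over `N ⊕ N`. -/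
def pagSoftTarget {N : Type} (G : MixedGraph (N ⊕ N)) (a : N) (y : N ⊕ N) : Option Mark :=
  if y = Sum.inl a then
    (if G.arrowAt (Sum.inl a) then some Mark.arrow
     else if ∃ c, G.undir (Sum.inl a) c then some Mark.tail
     else some Mark.circle)
  else if y ∈ G.outputs ∧ ((G.dir (Sum.inl a) y ∧ ¬ G.VisibleCond (Sum.inl a) y) ∨
      G.circArrow (Sum.inl a) y) then some Mark.arrow
  else if y ∈ G.outputs ∧ (G.undir (Sum.inl a) y ∨
      (G.circTail (Sum.inl a) y ∧ ∃ c, G.undir c y)) then some Mark.tail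
  else if y ∈ G.outputs ∧ (G.tailCirc (Sum.inl a) y ∨ G.circCirc (Sum.inl a) y ∨
      (G.circTail (Sum.inl a) y ∧ ¬ ∃ c, G.undir c y)) then some Mark.circle
  else none

/-- Generic soft-manipulation step on a graph over `N ⊕ N`: for each `a ∈ A` not
already an input, the regime node `I_a = Sum.inr a` is added as an input node,
with edges (and end marks) prescribed by `target`; the mark at `I_a` on each new
edge is a tail. -/
def softManipStep {N : Type}
    (target : MixedGraph (N ⊕ N) → N → (N ⊕ N) → Option Mark)
    (G : MixedGraph (N ⊕ N)) (A : Set N) : MixedGraph (N ⊕ N) where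
  inputs := G.inputs ∪ Sum.inr '' {a | a ∈ A ∧ Sum.inl a ∉ G.inputs}
  outputs := G.outputs
  mark := fun x y =>
    match x, y with
    | Sum.inr a, Sum.inr b =>
        if a ∈ A ∧ Sum.inl a ∉ G.inputs then
          (if (target G a (Sum.inr b)).isSome then some Mark.tail else none)
        else if b ∈ A ∧ Sum.inl b ∉ G.inputs then target G b (Sum.inr a)
        else G.mark x y
    | Sum.inr a, Sum.inl v =>
        if a ∈ A ∧ Sum.inl a ∉ G.inputs then
          (if (target G a (Sum.inl v)).isSome then some Mark.tail else none)
        else G.mark x y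
    | Sum.inl v, Sum.inr a =>
        if a ∈ A ∧ Sum.inl a ∉ G.inputs then target G a (Sum.inl v)
        else G.mark x y
    | Sum.inl _, Sum.inl _ => G.mark x y

/-- Soft-manipulation step for iMAG-type graphs over `N ⊕ N`. -/
def magSoftManipStep {N : Type} (G : MixedGraph (N ⊕ N)) (A : Set N) :
    MixedGraph (N ⊕ N) :=
  softManipStep magSoftTarget G A

/-- The soft-manipulated iMAG `M_{do(I_A)}`, over node type `N ⊕ N`. -/
def magSoftManip {N : Type} (M : MixedGraph N) (A : Set N) : MixedGraph (N ⊕ N) :=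
  magSoftManipStep M.sumInl A

/-- The soft-manipulated iPAG `P_{do(I_A)}`, over node type `N ⊕ N`. -/
def pagSoftManip {N : Type} (P : MixedGraph N) (A : Set N) : MixedGraph (N ⊕ N) :=
  softManipStep pagSoftTarget P.sumInl A

/-- Hard manipulation `do(T)` of an iPAG-type graph: as for iMAGs, but in addition
every remaining circle mark at a manipulated node is replaced by a tail. -/
def pagHardManip {N : Type} (G : MixedGraph N) (T : Set N) : MixedGraph N where
  inputs := G.inputs ∪ T
  outputs := G.outputs \ T
  mark := fun x y =>
    if (x ∈ T ∧ x ∉ G.inputs ∧ G.mark x y = some Mark.arrow) ∨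
        (y ∈ T ∧ y ∉ G.inputs ∧ G.mark y x = some Mark.arrow) ∨
        ((x ∈ T ∨ x ∈ G.inputs) ∧ (y ∈ T ∨ y ∈ G.inputs)) then none
    else if x ∈ T ∧ x ∉ G.inputs ∧ y ∈ G.outputs ∧ y ∉ T ∧
        G.mark x y = some Mark.circle then some Mark.tail
    else G.mark x y

/-- Orient all circle marks of `G` as tails. -/
def orientCirclesTails {N : Type} (G : MixedGraph N) : MixedGraph N :=
  { G with
    mark := fun x y =>
      (G.mark x y).map (fun m => if m = Mark.circle then Mark.tail else m) }

/-- There is a pc-connecting path from `a` to `b` in `G`: a single edge between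
`a` and `b` that is not a visible directed edge, or a path
`a *→ v₁ ↔ ⋯ ↔ v_{n−1} ←* b` (`n > 1`) none of whose edges is visible directed. -/
def PcConn {N : Type} (G : MixedGraph N) (a b : N) : Prop :=
  (G.adj a b ∧ ¬ G.VisibleDir a b ∧ ¬ G.VisibleDir b a) ∨
  (∃ w : GWalk G, w.IsPath ∧ 1 < w.len ∧ w.first = a ∧ w.last = b ∧
    G.mark (w.f 1) (w.f 0) = some Mark.arrow ∧
    G.mark (w.f (w.len - 1)) (w.f w.len) = some Mark.arrow ∧
    (∀ i, 1 ≤ i → i < w.len - 1 → G.bidir (w.f i) (w.f (i + 1))) ∧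
    (∀ i < w.len, ¬ G.VisibleDir (w.f i) (w.f (i + 1)) ∧
      ¬ G.VisibleDir (w.f (i + 1)) (w.f i)))

/-- The pc-component of `b` in `G`. -/
def pcSet {N : Type} (G : MixedGraph N) (b : N) : Set N := {a | PcConn G a b}

/-- The region of a set `B` in `G`: all nodes in the bucket of some node
pc-connected to a node of `B`. -/
def regionSet {N : Type} (G : MixedGraph N) (B : Set N) : Set N :=
  {a | ∃ b ∈ B, ∃ c, PcConn G c b ∧ G.SameBucket a c}

/-- `S` is a bucket of `G`. -/
def IsBucket {N : Type} (G : MixedGraph N) (S : Set N) : Prop :=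
  ∃ a ∈ G.nodes, S = {x | G.SameBucket x a}

/-- FCI rule R1 (closure form): if `k *→ j` with the edge between `j` and `i`
carrying a circle at `j`, `i` and `k` non-adjacent and `i` not an input node,
then that edge is `j → i`. -/
def FciR1 {N : Type} (P : MixedGraph N) : Prop :=
  ∀ i j k, P.mark j k = some Mark.arrow → ¬ P.adj i k → i ∉ P.inputs →
    P.mark j i = some Mark.circle → P.dir j i

/-- FCI rule R2 (closure form): if `i → j *→ k` or `i *→ j → k` with the edge
between `i` and `k` carrying a circle at `k`, then that edge has an arrowhead at `k`. -/
def FciR2 {N : Type} (P : MixedGraph N) : Prop :=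
  ∀ i j k, ((P.dir i j ∧ P.mark k j = some Mark.arrow) ∨
      (P.mark j i = some Mark.arrow ∧ P.dir j k)) →
    P.mark k i = some Mark.circle → P.mark k i = some Mark.arrow

/-- FCI rule R4 (closure form): for every discriminating path `⟨a,…,y,z⟩` for `y`,
the mark at `y` on the edge between `y` and `z` is not a circle. -/
def FciR4 {N : Type} (P : MixedGraph N) : Prop :=
  ∀ w : GWalk P, w.IsPath → 3 ≤ w.len → ¬ P.adj (w.f 0) (w.f w.len) →
    (∀ i, 0 < i → i < w.len - 1 → w.ColliderAt i ∧ P.dir (w.f i) (w.f w.len)) →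
    P.mark (w.f (w.len - 1)) (w.f w.len) ≠ some Mark.circle

/-- Property (P2) of iSOPAGs: no `a *→ b` together with `b −∘ c`, and no
`a *→ b` together with `b ∘− c`. -/
def SopagP2 {N : Type} (P : MixedGraph N) : Prop :=
  ∀ a b c, P.mark b a = some Mark.arrow → ¬ P.tailCirc b c ∧ ¬ P.circTail b c

/-- Property (P3) of iSOPAGs: if `a *→ b` and the edge between `b` and `c` has a
circle at `b`, then `a *→ c`. -/
def SopagP3 {N : Type} (P : MixedGraph N) : Prop :=
  ∀ a b c, P.mark b a = some Mark.arrow → P.mark b c = some Mark.circle →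
    P.mark c a = some Mark.arrow

/-- `P` is an iSOPAG: an iPAG representing some isADMG, closed under the FCI
orientation rules (R1, R2, R4), and satisfying (P2) and (P3). -/
def IsISOPAG {N : Type} (P : MixedGraph N) : Prop :=
  P.IsIPAG ∧ (∃ A : SADMG N, A.WF ∧ RepresentsS P A) ∧
  FciR1 P ∧ FciR2 P ∧ FciR4 P ∧ SopagP2 P ∧ SopagP3 P

/-!
If `a` is an input node, `A` has no arrowhead at `a`. Otherwise visibility supplies a node
`c`, not adjacent to `b`, and a path `c *→ v₁ ↔ ⋯ ↔ v_{n-1} ↔ a` in `M` (possibly just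
`c *→ a`) whose nodes other than `c` have tails towards `b`, hence lie in `Anc_A({b} ∪ S)`.
Each edge `u *→ v` of `M` is an `S`-inducing path of `A` that is into `v`, so an `S`-inducing
walk into `a` ending at `b` can be extended backwards one edge at a time: the junction `v` is
a collider in `Anc_A({b} ∪ S)`, and the extension is again into its first node whenever that
node carries an arrowhead in `M`. The result is an `S`-inducing walk from `c` to `b`;
cutting out closed subwalks turns it into an `S`-inducing path, so `c` and `b` would be
adjacent in `M`.
-/

namespace GWalk

variable {N : Type} {G : MixedGraph N}

def append (p q : GWalk G) (h : p.last = q.first) : GWalk G where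
  len := p.len + q.len
  f k := if k ≤ p.len then p.f k else q.f (k - p.len)
  hadj i hi := by
    by_cases hip : i < p.len
    · rw [if_pos hip.le, if_pos (Nat.succ_le_of_lt hip)]
      exact p.hadj i hip
    · rw [if_neg (by omega : ¬ i + 1 ≤ p.len), show i + 1 - p.len = i - p.len + 1 by omega]
      split_ifs with hi'
      · rw [show i = p.len by omega, show p.len - p.len = 0 by omega]
        show G.adj p.last (q.f (0 + 1))
        exact h ▸ q.hadj 0 (by omega)
      · exact q.hadj _ (by omega)

section Append

variable {p q : GWalk G} {h : p.last = q.first}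

@[simp] theorem append_len : (p.append q h).len = p.len + q.len := rfl

theorem append_f_of_le {k : ℕ} (hk : k ≤ p.len) : (p.append q h).f k = p.f k := if_pos hk

@[simp] theorem append_f_add (k : ℕ) : (p.append q h).f (p.len + k) = q.f k := by
  rcases Nat.eq_zero_or_pos k with rfl | hk
  · exact (append_f_of_le le_rfl).trans h
  · exact (if_neg (by omega)).trans (by simp)

@[simp] theorem append_first : (p.append q h).first = p.first := append_f_of_le (Nat.zero_le _)

@[simp] theorem append_last : (p.append q h).last = q.last := append_f_add q.len

end Append

def take (w : GWalk G) (n : ℕ) (hn : n ≤ w.len) : GWalk G :=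
  ⟨n, w.f, fun i hi => w.hadj i (by omega)⟩

def drop (w : GWalk G) (n : ℕ) : GWalk G :=
  ⟨w.len - n, fun k => w.f (n + k), fun i hi => by
    simpa only [Nat.add_assoc] using w.hadj (n + i) (by omega)⟩

def CollidersInAnc (w : GWalk G) (T : Set N) : Prop :=
  ∀ i, 0 < i → i < w.len → w.ColliderAt i ∧ w.f i ∈ G.ancSet T

theorem CollidersInAnc.mono {w : GWalk G} {T T' : Set N} (hw : w.CollidersInAnc T)
    (h : G.ancSet T ⊆ G.ancSet T') : w.CollidersInAnc T' :=
  fun i hi₀ hi => (hw i hi₀ hi).imp_right (@h _)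

theorem CollidersInAnc.take {w : GWalk G} {T : Set N} (hw : w.CollidersInAnc T) {n : ℕ}
    (hn : n ≤ w.len) : (w.take n hn).CollidersInAnc T :=
  fun i hi₀ hi => hw i hi₀ (by simp only [GWalk.take] at hi; omega)

theorem CollidersInAnc.drop {w : GWalk G} {T : Set N} (hw : w.CollidersInAnc T) (n : ℕ) :
    (w.drop n).CollidersInAnc T := by
  intro i hi₀ hi
  simp only [GWalk.drop, ColliderAt] at hi ⊢
  rw [show n + (i - 1) = n + i - 1 by omega, ← Nat.add_assoc]
  exact hw (n + i) (by omega) (by omega)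

theorem CollidersInAnc.append {p q : GWalk G} {T : Set N} (h : p.last = q.first)
    (hp : p.CollidersInAnc T) (hq : q.CollidersInAnc T)
    (hjoin : 0 < p.len → 0 < q.len →
      G.mark p.last (p.f (p.len - 1)) = some Mark.arrow ∧
      G.mark q.first (q.f 1) = some Mark.arrow ∧ p.last ∈ G.ancSet T) :
    (p.append q h).CollidersInAnc T := by
  intro i hi₀ hi
  simp only [append_len] at hi
  rcases lt_trichotomy i p.len with hip | rfl | hip
  · simp only [ColliderAt, append_f_of_le hip.le, append_f_of_le (by omega : i - 1 ≤ p.len),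
      append_f_of_le (by omega : i + 1 ≤ p.len)]
    exact hp i hi₀ hip
  · obtain ⟨h₁, h₂, h₃⟩ := hjoin hi₀ (by omega)
    simp only [ColliderAt, append_f_of_le le_rfl, append_f_of_le (Nat.sub_le p.len 1),
      append_f_add]
    exact ⟨⟨h₁, by rwa [← h] at h₂⟩, h₃⟩
  · obtain ⟨k, rfl⟩ := Nat.exists_eq_add_of_lt hip
    simp only [ColliderAt, Nat.add_assoc, show p.len + (k + 1) - 1 = p.len + k by omega,
      append_f_add]
    exact hq (k + 1) (by omega) (by omega)

theorem CollidersInAnc.exists_isPath {w : GWalk G} {T : Set N} (hw : w.CollidersInAnc T) :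
    ∃ w' : GWalk G, w'.IsPath ∧ w'.first = w.first ∧ w'.last = w.last ∧
      w'.CollidersInAnc T := by
  induction hn : w.len using Nat.strong_induction_on generalizing w with
  | _ n ih =>
  by_cases hp : w.IsPath
  · exact ⟨w, hp, rfl, rfl, hw⟩
  obtain ⟨i, j, hij, hj, hfij⟩ : ∃ i j, i < j ∧ j ≤ w.len ∧ w.f i = w.f j := by
    simp only [IsPath, not_forall] at hp
    obtain ⟨i, hi, j, hj, hfij, hne⟩ := hp
    rcases Nat.lt_or_gt_of_ne hne with h | h
    · exact ⟨i, j, h, hj, hfij⟩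
    · exact ⟨j, i, h, hi, hfij.symm⟩
  have hcut : (w.take i (by omega)).last = (w.drop j).first := hfij
  -- After cutting out positions `i + 1, …, j`, the node `w.f i = w.f j` is still a collider:
  -- its arrowheads come from the colliders at positions `i` and `j` of `w`.
  have hjoin : 0 < i → 0 < w.len - j →
      G.mark (w.f i) (w.f (i - 1)) = some Mark.arrow ∧
      G.mark (w.f j) (w.f (j + 1)) = some Mark.arrow ∧ w.f i ∈ G.ancSet T := fun hi hj' =>
    ⟨(hw i hi (by omega)).1.1, (hw j (by omega) (by omega)).1.2, (hw i hi (by omega)).2⟩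
  obtain ⟨w', hpath, hfirst, hlast, hw'⟩ :=
    ih (i + (w.len - j)) (by omega) ((hw.take _).append hcut (hw.drop j) hjoin) rfl
  refine ⟨w', hpath, hfirst, ?_, hw'⟩
  rw [hlast, append_last]
  show w.f (j + (w.len - j)) = w.f w.len
  rw [Nat.add_sub_cancel' hj]

end GWalk

namespace MixedGraph

variable {N : Type} {G : MixedGraph N}

theorem subset_ancSet (T : Set N) : T ⊆ G.ancSet T := fun x hx => ⟨x, hx, .refl⟩

theorem ancSet_subset_ancSet {U T : Set N} (h : U ⊆ G.ancSet T) : G.ancSet U ⊆ G.ancSet T := by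
  rintro x ⟨u, hu, hxu⟩
  obtain ⟨t, ht, hut⟩ := h hu
  exact ⟨t, ht, hxu.trans hut⟩

theorem ancSet_mono {U T : Set N} (h : U ⊆ T) : G.ancSet U ⊆ G.ancSet T :=
  ancSet_subset_ancSet (h.trans (subset_ancSet T))

theorem inducingWalk_empty_iff {S : Set N} {w : GWalk G} :
    G.InducingWalk ∅ S w ↔ w.CollidersInAnc ({w.first, w.last} ∪ S) := by
  simp only [InducingWalk, GWalk.CollidersInAnc, Set.mem_empty_iff_false, false_or]
  exact ⟨fun h i hi₀ hi => ⟨h.1 i hi₀ hi, h.2 i hi₀ hi (h.1 i hi₀ hi)⟩,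
    fun h => ⟨fun i hi₀ hi => (h i hi₀ hi).1, fun i hi₀ hi _ => (h i hi₀ hi).2⟩⟩

theorem InducingWalkBtw.inducingPathBtw {S : Set N} {a b : N}
    (h : G.InducingWalkBtw ∅ S a b) : G.InducingPathBtw ∅ S a b := by
  obtain ⟨w, rfl, rfl, hw⟩ := h
  obtain ⟨w', hpath, hfirst, hlast, hw'⟩ := (inducingWalk_empty_iff.1 hw).exists_isPath
  exact ⟨w', hpath, hfirst, hlast, inducingWalk_empty_iff.2 (hfirst ▸ hlast ▸ hw')⟩

theorem InducingWalk.f_mem_ancSet {S : Set N} {w : GWalk G} (hw : G.InducingWalk ∅ S w)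
    {i : ℕ} (hi : i ≤ w.len) : w.f i ∈ G.ancSet ({w.first, w.last} ∪ S) := by
  rcases Nat.eq_zero_or_pos i with rfl | hi₀
  · exact subset_ancSet _ (.inl (.inl rfl))
  rcases hi.lt_or_eq with hi | rfl
  · exact (inducingWalk_empty_iff.1 hw i hi₀ hi).2
  · exact subset_ancSet _ (.inl (.inr rfl))

theorem IsIADMG.mark_eq_arrow_or_dir (hG : G.IsIADMG) {y z : N} (h : G.adj z y) :
    G.mark y z = some Mark.arrow ∨ G.dir y z := by
  rcases hG.2.1 z y h with h | h | h
  · exact .inl h.2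
  · exact .inr h
  · exact .inl h.2

theorem IsIADMG.mem_ancSet_of_dir (hG : G.IsIADMG) {y z : N} {U : Set N} (hyz : G.dir y z)
    (hz : z ∈ G.ancSet (insert y U)) : y ∈ G.ancSet U := by
  obtain ⟨s, hs | hs, hzs⟩ := hz
  · exact absurd (hs ▸ hzs) (hG.2.2.1 y z hyz)
  · exact ⟨s, hs, .head hyz hzs⟩

theorem IsIADMG.mark_last_eq_arrow (hG : G.IsIADMG) {S : Set N} {w : GWalk G}
    (hw : G.InducingWalk ∅ S w) (hlen : 0 < w.len)
    (hlast : w.last ∉ G.ancSet ({w.first} ∪ S)) :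
    G.mark w.last (w.f (w.len - 1)) = some Mark.arrow := by
  have hadj : G.adj (w.f (w.len - 1)) (w.f w.len) := by
    simpa only [Nat.sub_add_cancel hlen] using w.hadj (w.len - 1) (by omega)
  refine (hG.mark_eq_arrow_or_dir hadj).resolve_right fun hdir =>
    hlast (hG.mem_ancSet_of_dir hdir ?_)
  rw [← Set.insert_union, Set.pair_comm]
  exact hw.f_mem_ancSet (by omega)

theorem IsIADMG.mark_first_eq_arrow (hG : G.IsIADMG) {S : Set N} {w : GWalk G}
    (hw : G.InducingWalk ∅ S w) (hlen : 0 < w.len)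
    (hfirst : w.first ∉ G.ancSet ({w.last} ∪ S)) :
    G.mark w.first (w.f 1) = some Mark.arrow := by
  have hadj : G.adj (w.f 1) w.first := hG.1.2.2.2.1 _ _ (w.hadj 0 hlen)
  refine (hG.mark_eq_arrow_or_dir hadj).resolve_right fun hdir =>
    hfirst (hG.mem_ancSet_of_dir hdir ?_)
  rw [← Set.insert_union]
  exact hw.f_mem_ancSet hlen

theorem IsIADMG.inducingWalk_append (hG : G.IsIADMG) {S : Set N} {p q : GWalk G}
    (h : p.last = q.first) (hp : G.InducingWalk ∅ S p) (hq : G.InducingWalk ∅ S q)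
    (hp_into : p.last ∉ G.ancSet ({p.first} ∪ S))
    (hq_into : G.mark q.first (q.f 1) = some Mark.arrow)
    (hanc : q.first ∈ G.ancSet ({q.last} ∪ S)) :
    G.InducingWalk ∅ S (p.append q h) := by
  rw [inducingWalk_empty_iff, GWalk.append_first, GWalk.append_last]
  set T : Set N := {p.first, q.last} ∪ S
  have hv : q.first ∈ G.ancSet T :=
    ancSet_mono (Set.union_subset_union_left S (by simp)) hanc
  have hS : S ⊆ G.ancSet T := fun x hx => subset_ancSet T (.inr hx)
  refine GWalk.CollidersInAnc.append h ((inducingWalk_empty_iff.1 hp).mono ?_)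
    ((inducingWalk_empty_iff.1 hq).mono ?_)
    fun hp₀ _ => ⟨hG.mark_last_eq_arrow hp hp₀ hp_into, h ▸ hq_into, h ▸ hv⟩
  · refine ancSet_subset_ancSet (Set.union_subset (Set.insert_subset_iff.2 ⟨?_, ?_⟩) hS)
    · exact subset_ancSet T (by simp [T])
    · exact Set.singleton_subset_iff.2 (h ▸ hv)
  · refine ancSet_subset_ancSet (Set.union_subset (Set.insert_subset_iff.2 ⟨hv, ?_⟩) hS)
    exact Set.singleton_subset_iff.2 (subset_ancSet T (by simp [T]))

def IntoInducingWalkBtw (G : MixedGraph N) (S : Set N) (a b : N) : Prop :=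
  ∃ w : GWalk G, w.first = a ∧ w.last = b ∧ G.InducingWalk ∅ S w ∧
    G.mark (w.f 0) (w.f 1) = some Mark.arrow

theorem intoInducingWalkBtw_of_mark_eq_arrow {S : Set N} {a b : N}
    (h : G.mark a b = some Mark.arrow) : G.IntoInducingWalkBtw S a b := by
  refine ⟨⟨1, fun k => if k = 0 then a else b, fun i hi => ?_⟩, rfl, rfl,
    ⟨fun i _ (hi : i < 1) => by omega, fun i _ (hi : i < 1) _ => by omega⟩, by simpa using h⟩
  obtain rfl : i = 0 := by omega
  simp [adj, h]

end MixedGraph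

namespace RepresentsS

open MixedGraph

variable {N : Type} {A : SADMG N} {M : MixedGraph N}

theorem exists_inducingWalk_of_mark_eq_arrow (hrep : RepresentsS M A) (hG : A.graph.IsIADMG)
    (hM : M.WF) {u v b : N} (huv : M.mark v u = some Mark.arrow)
    (hv : v ∈ A.graph.ancSet ({b} ∪ A.sel)) (hvb : A.graph.IntoInducingWalkBtw A.sel v b) :
    ∃ w : GWalk A.graph, w.first = u ∧ w.last = b ∧ A.graph.InducingWalk ∅ A.sel w ∧
      (u ∉ A.graph.ancSet ({v} ∪ A.sel) → A.graph.mark u (w.f 1) = some Mark.arrow) := by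
  have hvu : (M.mark v u).isSome := by simp [huv]
  obtain ⟨hv_node, hu_node⟩ := hM.2.2.2.2.2 v u hvu
  have hne : u ≠ v := by
    rintro rfl
    simp [hM.2.2.2.2.1] at huv
  obtain ⟨-, p, -, rfl, rfl, hp⟩ :=
    (hrep.2.2.1 u v hne hu_node hv_node).1 (hM.2.2.2.1 _ _ hvu)
  have hp₀ : 0 < p.len :=
    Nat.pos_of_ne_zero fun h₀ => hne (by simp [GWalk.first, GWalk.last, h₀])
  obtain ⟨q, hqf, rfl, hq, hq_into⟩ := hvb
  refine ⟨p.append q hqf.symm, by simp, by simp,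
    hG.inducingWalk_append hqf.symm hp hq (hrep.2.2.2.1 _ _ huv) hq_into (hqf ▸ hv),
    fun hu_anc => ?_⟩
  rw [GWalk.append_f_of_le hp₀]
  exact hG.mark_first_eq_arrow hp hp₀ hu_anc

theorem adj_of_mark_eq_arrow (hrep : RepresentsS M A) (hG : A.graph.IsIADMG) (hM : M.WF)
    {u v b : N} (hb : b ∈ M.outputs) (hub : u ≠ b) (huv : M.mark v u = some Mark.arrow)
    (hv : v ∈ A.graph.ancSet ({b} ∪ A.sel)) (hvb : A.graph.IntoInducingWalkBtw A.sel v b) :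
    M.adj u b := by
  obtain ⟨w, hwf, hwl, hw, -⟩ := hrep.exists_inducingWalk_of_mark_eq_arrow hG hM huv hv hvb
  have hu : u ∈ M.nodes := (hM.2.2.2.2.2 v u (by simp [huv])).2
  exact (hrep.2.2.1 u b hub hu (.inr hb)).2
    ⟨fun h => Set.disjoint_left.1 hM.1 h.2 hb,
      InducingWalkBtw.inducingPathBtw ⟨w, hwf, hwl, hw⟩⟩

theorem intoInducingWalkBtw_of_bidir (hrep : RepresentsS M A) (hG : A.graph.IsIADMG)
    (hM : M.WF) {u v b : N} (huv : M.bidir u v) (hv : v ∈ A.graph.ancSet ({b} ∪ A.sel))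
    (hvb : A.graph.IntoInducingWalkBtw A.sel v b) : A.graph.IntoInducingWalkBtw A.sel u b := by
  obtain ⟨w, rfl, hwl, hw, hw_into⟩ :=
    hrep.exists_inducingWalk_of_mark_eq_arrow hG hM huv.2 hv hvb
  exact ⟨w, rfl, hwl, hw, hw_into (hrep.2.2.2.1 _ v huv.1)⟩

theorem intoInducingWalkBtw_of_bidir_chain (hrep : RepresentsS M A) (hG : A.graph.IsIADMG)
    (hM : M.WF) {b : N} {f : ℕ → N} {m n : ℕ}
    (hbid : ∀ i, m ≤ i → i < n → M.bidir (f i) (f (i + 1)))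
    (hanc : ∀ i, m < i → i ≤ n → f i ∈ A.graph.ancSet ({b} ∪ A.sel))
    (hn : A.graph.IntoInducingWalkBtw A.sel (f n) b) {i : ℕ} (hmi : m ≤ i) (hin : i ≤ n) :
    A.graph.IntoInducingWalkBtw A.sel (f i) b := by
  induction hin using Nat.decreasingInduction with
  | self => exact hn
  | of_succ i hi ih =>
    exact hrep.intoInducingWalkBtw_of_bidir hG hM (hbid i hmi hi) (hanc (i + 1) (by omega) hi)
      (ih (by omega))

end RepresentsS

theorem statement2_general {N : Type} (A : SADMG N) (hA : A.WF)
    (M : MixedGraph N) (hM : M.IsIMAG) (hrep : RepresentsS M A)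
    (a b : N) (hb : b ∈ M.outputs)
    (hdir : M.dir a b) (hvis : M.VisibleCond a b) :
    (¬ ∃ w : GWalk A.graph, w.first = a ∧ w.last = b ∧
        A.graph.InducingWalk ∅ A.sel w ∧
        A.graph.mark (w.f 0) (w.f 1) = some Mark.arrow) ∧
    ¬ A.graph.bidir a b := by
  have hG : A.graph.IsIADMG := hA.1
  have hMwf : M.WF := hM.1.1
  have ha : a ∈ A.graph.ancSet ({b} ∪ A.sel) := hrep.2.2.2.2 a b hdir.1
  have hnot : ¬ A.graph.IntoInducingWalkBtw A.sel a b := by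
    intro hab
    rcases hvis with ha_in | ⟨c, hcb, hnadj, hca | ⟨pw, -, hlen, rfl, rfl, hc₁, hbid, hpa⟩⟩
    · obtain ⟨w, rfl, -, -, hw⟩ := hab
      exact hG.2.2.2.1 _ (hrep.1 ▸ ha_in) _ hw
    · exact hnadj (hrep.adj_of_mark_eq_arrow hG hMwf hb hcb hca ha hab)
    · have hanc : ∀ i, 1 ≤ i → i ≤ pw.len →
          pw.f i ∈ A.graph.ancSet ({b} ∪ A.sel) := by
        intro i h₁ h₂
        rcases h₂.lt_or_eq with h₂ | rfl
        · exact hrep.2.2.2.2 _ _ (hpa i h₁ h₂).1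
        · exact ha
      exact hnadj (hrep.adj_of_mark_eq_arrow hG hMwf hb hcb hc₁ (hanc 1 le_rfl (by omega))
        (hrep.intoInducingWalkBtw_of_bidir_chain hG hMwf hbid (fun i hi => hanc i hi.le) hab
          le_rfl (by omega)))
  exact ⟨hnot, fun hba => hnot (MixedGraph.intoInducingWalkBtw_of_mark_eq_arrow hba.1)⟩

/-- Let `A` be an isADMG and `M` an iMAG representing `A`.  If the
directed edge `a → b` is in `M` and is visible, then there is no `S`-inducing walk
from `a` to `b` in `A` whose edge at `a` has an arrowhead at `a`; in particular,
the bidirected edge `a ↔ b` is not in `A`. -/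
theorem statement2 {N : Type} (A : SADMG N) (hA : A.WF)
    (M : MixedGraph N) (hM : M.IsIMAG) (hrep : RepresentsS M A)
    (a b : N) (ha : a ∈ M.nodes) (hb : b ∈ M.outputs)
    (hdir : M.dir a b) (hvis : M.VisibleCond a b) :
    (¬ ∃ w : GWalk A.graph, w.first = a ∧ w.last = b ∧
        A.graph.InducingWalk ∅ A.sel w ∧
        A.graph.mark (w.f 0) (w.f 1) = some Mark.arrow) ∧
    ¬ A.graph.bidir a b :=
  statement2_general A hA M hM hrep a b hb hdir hvis

end
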